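/- For every σ ∈ S_n, Inv(σ) = Sor(φ(σ)); that is, the inversion set of σ equals the sorting set of φ(σ). -/

import Mathlib

open scoped Classical

namespace SortIdx

variable {n : ℕ}

noncomputable section

/-- The inversion number `inv σ := #{(i,j) : i < j ∧ σ i > σ j}`. -/
def inv (σ : Equiv.Perm (Fin n)) : ℕ :=
  (Finset.univ.filter (fun p : Fin n × Fin n => p.1 < p.2 ∧ σ p.2 < σ p.1)).card

/-- The inversion set `Inv σ := {(i,j) : i < j ∧ σ i > σ j}`. -/
def InvSet (σ : Equiv.Perm (Fin n)) : Finset (Fin n × Fin n) :=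
  Finset.univ.filter (fun p : Fin n × Fin n => p.1 < p.2 ∧ σ p.2 < σ p.1)

/-- Right-to-left minimum letters. -/
def RmilSet (σ : Equiv.Perm (Fin n)) : Finset (Fin n) :=
  (Finset.univ.filter (fun i => ∀ j, i < j → σ i < σ j)).image σ

/-- The number of right-to-left minima. -/
def rmin (σ : Equiv.Perm (Fin n)) : ℕ := (RmilSet σ).card

/-- Right-to-left minimum places. -/
def RmipSet (σ : Equiv.Perm (Fin n)) : Finset (Fin n) :=
  Finset.univ.filter (fun i => ∀ j, i < j → σ i < σ j)

/-- Right-to-left maximum letters. -/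
def RmalSet (σ : Equiv.Perm (Fin n)) : Finset (Fin n) :=
  (Finset.univ.filter (fun i => ∀ j, i < j → σ j < σ i)).image σ

/-- The number of right-to-left maxima. -/
def rmax (σ : Equiv.Perm (Fin n)) : ℕ := (RmalSet σ).card

/-- Left-to-right minimum letters. -/
def LmilSet (σ : Equiv.Perm (Fin n)) : Finset (Fin n) :=
  (Finset.univ.filter (fun i => ∀ j, j < i → σ i < σ j)).image σ

/-- The number of left-to-right minima. -/
def lmin (σ : Equiv.Perm (Fin n)) : ℕ := (LmilSet σ).card

/-- Left-to-right minimum places. -/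
def LmipSet (σ : Equiv.Perm (Fin n)) : Finset (Fin n) :=
  Finset.univ.filter (fun i => ∀ j, j < i → σ i < σ j)

/-- Left-to-right maximum letters. -/
def LmalSet (σ : Equiv.Perm (Fin n)) : Finset (Fin n) :=
  (Finset.univ.filter (fun i => ∀ j, j < i → σ j < σ i)).image σ

/-- The number of left-to-right maxima. -/
def lmax (σ : Equiv.Perm (Fin n)) : ℕ := (LmalSet σ).card

/-- Left-to-right maximum places. -/
def LmapSet (σ : Equiv.Perm (Fin n)) : Finset (Fin n) :=
  Finset.univ.filter (fun i => ∀ j, j < i → σ j < σ i)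

/-- `Cyc σ`: the set of smallest elements of the cycles of `σ`
(`i` is smallest in its cycle iff `i ≤ σ^k i` for all `k`). -/
def CycSet (σ : Equiv.Perm (Fin n)) : Finset (Fin n) :=
  Finset.univ.filter (fun i => ∀ k : ℕ, i ≤ (σ ^ k) i)

/-- The number of cycles of `σ` (fixed points included). -/
def cyc (σ : Equiv.Perm (Fin n)) : ℕ := (CycSet σ).card

/-- One step of the sorting process computing the sorting index: repeatedly
put the largest not-yet-fixed letter `j` in its place by the transposition
`(i j)` where `i = σ⁻¹ j` is the place of the letter `j`, recording the
distance `j - i`.  This produces the unique factorization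
`σ = (i₁ j₁)(i₂ j₂)⋯(i_k j_k)` with `j₁ < ⋯ < j_k`, `i_r < j_r`, and sums
the `j_r - i_r`.  The fuel `n` is always sufficient. -/
def sorAux : ℕ → Equiv.Perm (Fin n) → ℕ
  | 0, _ => 0
  | (fuel + 1), σ =>
    if h : σ.support.Nonempty then
      (((σ.support.max' h : Fin n) : ℕ) - ((σ⁻¹ (σ.support.max' h) : Fin n) : ℕ)) +
        sorAux fuel (σ * Equiv.swap (σ⁻¹ (σ.support.max' h)) (σ.support.max' h))
    else 0

/-- The sorting index of Petersen. -/
def sor (σ : Equiv.Perm (Fin n)) : ℕ := sorAux n σ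

theorem bcode_exists (σ : Equiv.Perm (Fin n)) (i : Fin n) :
    ∃ k : ℕ, 0 < k ∧ (σ⁻¹ ^ k) i ≤ i := by
  refine ⟨orderOf σ⁻¹, orderOf_pos σ⁻¹, ?_⟩
  rw [pow_orderOf_eq_one]
  simp

/-- The `B`-code of `σ`: `Bcode σ i = σ^(-k) i` where `k ≥ 1` is minimal with
`σ^(-k) i ≤ i`. -/
def Bcode (σ : Equiv.Perm (Fin n)) (i : Fin n) : Fin n :=
  (σ⁻¹ ^ (Nat.find (bcode_exists σ i))) i

/-- The `B`-code as a sequence in `L_n` (1-indexed values: the entry at place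
`i` is the 1-indexed name of the letter `Bcode σ i`). -/
def BcodeNat (σ : Equiv.Perm (Fin n)) : Fin n → ℕ :=
  fun i => ((Bcode σ i : Fin n) : ℕ) + 1

/-- The Lehmer code: `Leh σ i = #{j : j ≤ i ∧ σ j ≤ σ i}` (1-indexed values). -/
def Leh (σ : Equiv.Perm (Fin n)) : Fin n → ℕ :=
  fun i => (Finset.univ.filter (fun j => j ≤ i ∧ σ j ≤ σ i)).card

/-- The `A`-code: `A σ := Leh σ⁻¹`. -/
def Acode (σ : Equiv.Perm (Fin n)) : Fin n → ℕ := Leh σ⁻¹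

/-- `O(code) := {i : code i = 1}` (for `1`-indexed codes in `L_n`). -/
def Oset (code : Fin n → ℕ) : Finset (Fin n) :=
  Finset.univ.filter (fun i => code i = 1)

/-- `Lmic1 σ := O(B σ)`, the set of places where the `B`-code equals `1`,
equivalently the left-to-right minima of the shifted cycle containing `1`. -/
def Lmic1Set (σ : Equiv.Perm (Fin n)) : Finset (Fin n) :=
  Oset (BcodeNat σ)

/-- `lmic1 σ := #{i : (B σ)_i = 1}`. -/
def lmic1 (σ : Equiv.Perm (Fin n)) : ℕ := (Lmic1Set σ).card

/-- The bijection `φ = B⁻¹ ∘ A` of Foata–Han. -/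
def phi (σ : Equiv.Perm (Fin n)) : Equiv.Perm (Fin n) :=
  Function.invFun BcodeNat (Acode σ)

/-- The algorithm computing the induced set of a code: the list argument is
the list of places still to process (from the last to the first), `S` is the
set of letters still available.  At place `i` we pick the `(code i)`-th
smallest element `l` of `S` (1-indexed), put the pairs `(l, j)` for `j ∈ S`,
`j > l` into the answer and remove `l` from `S`. -/
def inducedAux : List (Fin n) → Finset (Fin n) → (Fin n → ℕ) → Finset (Fin n × Fin n)
  | [], _, _ => ∅
  | (i :: is), S, code =>
      ((S.filter (fun j => (S.sort (· ≤ ·)).getD (code i - 1) i < j)).image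
          (fun j => ((S.sort (· ≤ ·)).getD (code i - 1) i, j))) ∪
        inducedAux is (S.erase ((S.sort (· ≤ ·)).getD (code i - 1) i)) code

/-- The induced set `⟨code⟩` of a code in `L_n`. -/
def induced (code : Fin n → ℕ) : Finset (Fin n × Fin n) :=
  inducedAux (List.finRange n).reverse Finset.univ code

/-- The sorting set `Sor σ := ⟨B σ⟩`. -/
def SorSet (σ : Equiv.Perm (Fin n)) : Finset (Fin n × Fin n) :=
  induced (BcodeNat σ)

/-- The descent set (as a set of places `i`, `0`-indexed, such that
`σ i > σ (i+1)`). -/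
def DesSet (σ : Equiv.Perm (Fin n)) : Finset (Fin n) :=
  Finset.univ.filter (fun i => ∃ h : (i : ℕ) + 1 < n, σ ⟨(i : ℕ) + 1, h⟩ < σ i)

/-- The major index (descents being counted `1`-indexed). -/
def maj (σ : Equiv.Perm (Fin n)) : ℕ :=
  ∑ i ∈ DesSet σ, ((i : ℕ) + 1)

/-- The charge `chg σ := ∑_{i ∈ Des σ⁻¹} (n - i)` (descents `1`-indexed). -/
def chg (σ : Equiv.Perm (Fin n)) : ℕ :=
  ∑ i ∈ DesSet σ⁻¹, (n - ((i : ℕ) + 1))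

/-- The reverse-complement of `σ` : `τ i = n + 1 - σ (n + 1 - i)` (1-indexed). -/
def revcomp (σ : Equiv.Perm (Fin n)) : Equiv.Perm (Fin n) :=
  Fin.revPerm * σ * Fin.revPerm

/-- The reverse major index `rmaj σ := maj (revcomp σ)`. -/
def rmaj (σ : Equiv.Perm (Fin n)) : ℕ := maj (revcomp σ)

end

end SortIdx

/-!
Every sequence `b ∈ L_n` is a `B`-code: `b` is the `B`-code of `(b_1 1)(b_2 2)⋯(b_n n)`. Indeed,
multiplying `ρ` with `ρ m = m` by the transposition `(a m)` on the right only inserts the letter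
`m` just before `a` in the cycle of `ρ⁻¹`, which changes no first return below `m`, while the
first return of `m` itself becomes `a`. Hence `B (φ σ) = A σ` and `Sor (φ σ) = ⟨A σ⟩`.
When the induced-set algorithm reaches place `m`, the letters left are `σ⁻¹ {1, …, m}`, and
`A(σ)_m` is the rank of `σ⁻¹ m` among them, so it records exactly the inversions `(σ⁻¹ m, j)`.
-/

theorem List.getD_length_filter_le_sub_one {α : Type*} [LinearOrder α] {L : List α}
    (hL : L.Pairwise (· < ·)) {x : α} (hx : x ∈ L) (d : α) :
    L.getD ((L.filter (· ≤ x)).length - 1) d = x := by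
  induction L with
  | nil => simp at hx
  | cons a L ih =>
    rw [List.pairwise_cons] at hL
    obtain rfl | hxL := List.mem_cons.1 hx
    · have : L.filter (· ≤ x) = [] :=
        List.filter_eq_nil_iff.2 fun y hy => by simpa using hL.1 y hy
      simp [this]
    · have hpos : 0 < (L.filter (· ≤ x)).length :=
        List.length_pos_of_mem (List.mem_filter.2 ⟨hxL, by simp⟩)
      have := ih hL.2 hxL
      simp only [List.filter_cons, (hL.1 x hxL).le, decide_true, if_true, List.length_cons,
        Nat.add_sub_cancel]
      rwa [← Nat.sub_add_cancel hpos, List.getD_cons_succ]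

theorem Finset.getD_sort_card_filter_le_sub_one {α : Type*} [LinearOrder α] {S : Finset α}
    {x : α} (hx : x ∈ S) (d : α) :
    (S.sort (· ≤ ·)).getD ((S.filter (· ≤ x)).card - 1) d = x := by
  have hcard : (S.filter (· ≤ x)).card = ((S.sort (· ≤ ·)).filter (· ≤ x)).length := by
    rw [← Multiset.coe_card, ← Multiset.filter_coe, Finset.sort_eq, ← Finset.filter_val,
      Finset.card_val]
  rw [hcard]
  exact List.getD_length_filter_le_sub_one S.sortedLT_sort.pairwise ((S.mem_sort _).2 hx) d

theorem List.take_finRange_succ {n m : ℕ} (hm : m < n) :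
    (List.finRange n).take (m + 1) = (List.finRange n).take m ++ [⟨m, hm⟩] := by
  rw [List.take_add_one, List.getElem?_eq_getElem (by simpa), List.getElem_finRange]
  rfl

namespace SortIdx

open Equiv Relation

variable {n : ℕ}

def AboveStep (σ : Perm (Fin n)) (i x y : Fin n) : Prop :=
  σ⁻¹ x = y ∧ i < y

theorem reflTransGen_aboveStep_iff {σ : Perm (Fin n)} {i z : Fin n} :
    ReflTransGen (AboveStep σ i) i z ↔
      ∃ t, (σ⁻¹ ^ t) i = z ∧ ∀ s, 0 < s → s ≤ t → i < (σ⁻¹ ^ s) i := by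
  constructor
  · intro h
    induction h with
    | refl => exact ⟨0, rfl, fun s hs hst => absurd hst (by omega)⟩
    | tail _ hyz ih =>
      obtain ⟨t, rfl, ht⟩ := ih
      refine ⟨t + 1, by rw [pow_succ', Perm.mul_apply, hyz.1], fun s hs hst => ?_⟩
      obtain hst | rfl := Nat.le_succ_iff.1 hst
      · exact ht s hs hst
      · rw [pow_succ', Perm.mul_apply, hyz.1]
        exact hyz.2
  · rintro ⟨t, rfl, ht⟩
    induction t with
    | zero => exact ReflTransGen.refl
    | succ t ih =>
      refine ReflTransGen.tail (ih fun s hs hst => ht s hs (by omega)) ⟨?_, ht _ t.succ_pos le_rfl⟩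
      rw [pow_succ', Perm.mul_apply]

theorem bcode_eq_iff {σ : Perm (Fin n)} {i b : Fin n} :
    Bcode σ i = b ↔ b ≤ i ∧ ∃ z, ReflTransGen (AboveStep σ i) i z ∧ σ⁻¹ z = b := by
  constructor
  · rintro rfl
    obtain ⟨hk, hle⟩ := Nat.find_spec (bcode_exists σ i)
    set k := Nat.find (bcode_exists σ i)
    have hmin : ∀ s, 0 < s → s ≤ k - 1 → i < (σ⁻¹ ^ s) i := fun s hs hsk =>
      not_le.1 fun hle => Nat.find_min (bcode_exists σ i) (by omega : s < k) ⟨hs, hle⟩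
    refine ⟨hle, _, reflTransGen_aboveStep_iff.2 ⟨k - 1, rfl, hmin⟩, ?_⟩
    rw [Bcode, ← Perm.mul_apply, ← pow_succ', Nat.sub_add_cancel hk]
  · rintro ⟨hb, z, hz, rfl⟩
    obtain ⟨t, rfl, ht⟩ := reflTransGen_aboveStep_iff.1 hz
    have hfind : Nat.find (bcode_exists σ i) = t + 1 := by
      rw [Nat.find_eq_iff]
      refine ⟨⟨t.succ_pos, by rwa [pow_succ', Perm.mul_apply]⟩, fun s hs ⟨hs0, hle⟩ => ?_⟩
      exact (ht s hs0 (by omega)).not_ge hle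
    rw [Bcode, hfind, pow_succ', Perm.mul_apply]

theorem bcode_mul_swap_self {ρ : Perm (Fin n)} {a M : Fin n} (hM : ρ M = M) (ha : a ≤ M) :
    Bcode (ρ * swap a M) M = a := by
  refine bcode_eq_iff.2 ⟨ha, M, ReflTransGen.refl, ?_⟩
  rw [mul_inv_rev, swap_inv, Perm.mul_apply, Perm.inv_eq_iff_eq.2 hM.symm, swap_apply_right]

theorem bcode_mul_swap_of_lt {ρ : Perm (Fin n)} {a M i : Fin n} (hM : ρ M = M) (hi : i < M) :
    Bcode (ρ * swap a M) i = Bcode ρ i := by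
  set σ := ρ * swap a M
  have hρM : ρ⁻¹ M = M := Perm.inv_eq_iff_eq.2 hM.symm
  have hσ : ∀ x, σ⁻¹ x = swap a M (ρ⁻¹ x) := fun x => by simp [σ, mul_inv_rev]
  have hstep : ∀ y, y ≠ M → ReflTransGen (AboveStep σ i) i y →
      ∃ z, ReflTransGen (AboveStep σ i) i z ∧ σ⁻¹ z = ρ⁻¹ y := by
    intro y hyM hy
    by_cases hya : ρ⁻¹ y = a
    · refine ⟨M, hy.tail ⟨by rw [hσ, hya, swap_apply_left], hi⟩, ?_⟩
      rw [hσ, hρM, swap_apply_right, hya]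
    · refine ⟨y, hy, (hσ y).trans (swap_apply_of_ne_of_ne hya fun h => hyM ?_)⟩
      rwa [← hρM, (ρ⁻¹).injective.eq_iff] at h
  have hpath : ∀ y, ReflTransGen (AboveStep ρ i) i y → y ≠ M ∧ ReflTransGen (AboveStep σ i) i y := by
    intro y hy
    induction hy with
    | refl => exact ⟨hi.ne, ReflTransGen.refl⟩
    | @tail y w _ hyw ih =>
      obtain ⟨z, hz, hzw⟩ := hstep y ih.1 ih.2
      exact ⟨fun hw => ih.1 ((ρ⁻¹).injective (hyw.1.trans (hw.trans hρM.symm))),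
        hz.tail ⟨hzw.trans hyw.1, hyw.2⟩⟩
  obtain ⟨hb, y, hy, hyb⟩ := bcode_eq_iff.1 (rfl : Bcode ρ i = _)
  obtain ⟨z, hz, hzy⟩ := hstep y (hpath y hy).1 (hpath y hy).2
  exact bcode_eq_iff.2 ⟨hb, z, hz, hzy.trans hyb⟩

def swapProd (c : Fin n → Fin n) (m : ℕ) : Perm (Fin n) :=
  (((List.finRange n).take m).map fun i => swap (c i) i).prod

theorem swapProd_succ (c : Fin n → Fin n) {m : ℕ} (hm : m < n) :
    swapProd c (m + 1) = swapProd c m * swap (c ⟨m, hm⟩) ⟨m, hm⟩ := by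
  simp [swapProd, List.take_finRange_succ hm]

theorem swapProd_apply_of_le {c : Fin n → Fin n} (hc : ∀ i, c i ≤ i) :
    ∀ m ≤ n, ∀ j : Fin n, m ≤ j → swapProd c m j = j := by
  intro m
  induction m with
  | zero => intro _ j _; rfl
  | succ m ih =>
    intro hm j hj
    rw [swapProd_succ c hm, Perm.mul_apply, swap_apply_of_ne_of_ne, ih (by omega) j (by omega)]
    · exact ne_of_gt (lt_of_le_of_lt (hc _) (Fin.lt_def.2 hj))
    · exact ne_of_gt (Fin.lt_def.2 hj)

theorem bcode_swapProd {c : Fin n → Fin n} (hc : ∀ i, c i ≤ i) :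
    ∀ m ≤ n, ∀ i : Fin n, i < m → Bcode (swapProd c m) i = c i := by
  intro m
  induction m with
  | zero => intro _ i hi; omega
  | succ m ih =>
    intro hm i hi
    have hfix := swapProd_apply_of_le hc m (by omega) ⟨m, hm⟩ le_rfl
    rw [swapProd_succ c hm]
    obtain hi | hi := Nat.lt_succ_iff_lt_or_eq.1 hi
    · rw [bcode_mul_swap_of_lt hfix (Fin.lt_def.2 hi), ih (by omega) i hi]
    · obtain rfl : i = ⟨m, hm⟩ := Fin.ext hi
      exact bcode_mul_swap_self hfix (hc _)

theorem exists_bcodeNat_eq {f : Fin n → ℕ} (hf₁ : ∀ i, 1 ≤ f i) (hf₂ : ∀ i : Fin n, f i ≤ i + 1) :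
    ∃ τ : Perm (Fin n), BcodeNat τ = f := by
  let c : Fin n → Fin n := fun i => ⟨f i - 1, by have := hf₂ i; omega⟩
  have hc : ∀ i, c i ≤ i := fun i => Fin.le_def.2 (by have := hf₂ i; simp [c]; omega)
  refine ⟨swapProd c n, funext fun i => ?_⟩
  rw [BcodeNat, bcode_swapProd hc n le_rfl i i.2]
  have := hf₁ i
  simp [c]
  omega

theorem one_le_acode (σ : Perm (Fin n)) (i : Fin n) : 1 ≤ Acode σ i :=
  Finset.card_pos.2 ⟨i, Finset.mem_filter.2 ⟨Finset.mem_univ i, le_rfl, le_rfl⟩⟩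

theorem acode_le (σ : Perm (Fin n)) (i : Fin n) : Acode σ i ≤ i + 1 := by
  rw [← Fin.card_Iic, Acode, Leh]
  exact Finset.card_le_card fun j hj => Finset.mem_Iic.2 (Finset.mem_filter.1 hj).2.1

theorem bcodeNat_phi (σ : Perm (Fin n)) : BcodeNat (phi σ) = Acode σ :=
  Function.invFun_eq (exists_bcodeNat_eq (one_le_acode σ) (acode_le σ))

def placesBelow (σ : Perm (Fin n)) (m : ℕ) : Finset (Fin n) :=
  Finset.univ.filter fun a => (σ a : ℕ) < m

@[simp]
theorem mem_placesBelow {σ : Perm (Fin n)} {m : ℕ} {a : Fin n} :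
    a ∈ placesBelow σ m ↔ (σ a : ℕ) < m := by
  simp [placesBelow]

theorem acode_eq_card_placesBelow (σ : Perm (Fin n)) {m : ℕ} (hm : m < n) :
    Acode σ ⟨m, hm⟩ = ((placesBelow σ (m + 1)).filter (· ≤ σ⁻¹ ⟨m, hm⟩)).card := by
  simp only [Acode, Leh]
  refine Finset.card_equiv σ⁻¹ fun j => ?_
  simp only [Finset.mem_filter, Finset.mem_univ, true_and, mem_placesBelow, Perm.coe_inv,
    apply_symm_apply, Fin.le_def, Nat.lt_succ_iff]

theorem placesBelow_succ_erase (σ : Perm (Fin n)) {m : ℕ} (hm : m < n) :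
    (placesBelow σ (m + 1)).erase (σ⁻¹ ⟨m, hm⟩) = placesBelow σ m := by
  ext a
  simp only [Finset.mem_erase, mem_placesBelow, Ne, Perm.eq_inv_iff_eq, Fin.ext_iff]
  omega

theorem image_placesBelow_succ (σ : Perm (Fin n)) {m : ℕ} (hm : m < n) :
    (((placesBelow σ (m + 1)).filter (σ⁻¹ ⟨m, hm⟩ < ·)).image (σ⁻¹ ⟨m, hm⟩, ·)) =
      (InvSet σ).filter fun p => (σ p.1 : ℕ) = m := by
  set M : Fin n := ⟨m, hm⟩
  have hσM : σ (σ⁻¹ M) = M := by simp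
  ext ⟨x, y⟩
  simp only [InvSet, Finset.mem_image, Finset.mem_filter, Finset.mem_univ, true_and,
    mem_placesBelow, Prod.mk.injEq]
  constructor
  · rintro ⟨j, ⟨hj, hxj⟩, rfl, rfl⟩
    have hjM : σ j ≠ M := fun h => hxj.ne' (Perm.eq_inv_iff_eq.2 h)
    rw [hσM]
    exact ⟨⟨hxj, Fin.lt_def.2 (lt_of_le_of_ne (Nat.lt_succ_iff.1 hj) (Fin.val_ne_of_ne hjM))⟩,
      rfl⟩
  · rintro ⟨⟨hxy, hyx⟩, hx⟩
    obtain rfl : x = σ⁻¹ M := Perm.eq_inv_iff_eq.2 (Fin.ext hx)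
    rw [hσM, Fin.lt_def] at hyx
    exact ⟨y, ⟨by omega, hxy⟩, rfl, rfl⟩

theorem inducedAux_cons_of_card_eq {i : Fin n} (is : List (Fin n)) {S : Finset (Fin n)}
    {code : Fin n → ℕ} {x : Fin n} (hx : x ∈ S) (hi : code i = (S.filter (· ≤ x)).card) :
    inducedAux (i :: is) S code =
      (S.filter (x < ·)).image (x, ·) ∪ inducedAux is (S.erase x) code := by
  rw [inducedAux, hi, Finset.getD_sort_card_filter_le_sub_one hx]

theorem inducedAux_acode (σ : Perm (Fin n)) :
    ∀ m ≤ n, inducedAux ((List.finRange n).take m).reverse (placesBelow σ m) (Acode σ) =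
      (InvSet σ).filter fun p => (σ p.1 : ℕ) < m := by
  intro m
  induction m with
  | zero => intro _; ext; simp [inducedAux]
  | succ m ih =>
    intro hm
    have hmem : σ⁻¹ ⟨m, hm⟩ ∈ placesBelow σ (m + 1) := by simp
    rw [List.take_finRange_succ hm, List.reverse_append, List.reverse_singleton,
      List.singleton_append, inducedAux_cons_of_card_eq _ hmem (acode_eq_card_placesBelow σ hm),
      placesBelow_succ_erase, image_placesBelow_succ, ih (by omega), ← Finset.filter_or]
    exact Finset.filter_congr fun p _ => by omega

theorem induced_acode (σ : Perm (Fin n)) : induced (Acode σ) = InvSet σ := by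
  have := inducedAux_acode σ n le_rfl
  rwa [List.take_of_length_le (by simp), Finset.filter_true_of_mem fun p _ => (σ p.1).2,
    show placesBelow σ n = Finset.univ by ext a; simp] at this

end SortIdx

/-- Lemma 2.5.  `Inv σ = Sor (φ σ)`. -/
theorem invSet_eq_sorSet_phi (n : ℕ) (σ : Equiv.Perm (Fin n)) :
    SortIdx.InvSet σ = SortIdx.SorSet (SortIdx.phi σ) := by
  rw [SortIdx.SorSet, SortIdx.bcodeNat_phi, SortIdx.induced_acode]
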